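/- arXiv:1009.2178 — 2 statements merged into one kernel-verified Lean document; each statement's English description precedes it below -/
import Mathlib

section
/- Let p : α → β → Prop, u : α, and θ₁ θ₂ : Set β. Suppose (completeness) every z with p u z lies in θ₁ ∪ θ₂, and for each i ∈ {1,2} there is exactly one z ∈ θᵢ with p u z. Then ¬(∃ z, p u z ∧ Q z) is equivalent to (∃ z ∈ θ₁, p u z ∧ ¬ Q z) ∧ (∃ z ∈ θ₂, p u z ∧ ¬ Q z). -/
theorem stmt_2 {α β : Type*} (p : α → β → Prop) (Q : β → Prop) (u : α)
    (θ₁ θ₂ : Set β)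
    (hcomp : ∀ z, p u z → z ∈ θ₁ ∨ z ∈ θ₂)
    (h1 : ∃! z, z ∈ θ₁ ∧ p u z)
    (h2 : ∃! z, z ∈ θ₂ ∧ p u z) :
    ¬(∃ z, p u z ∧ Q z) ↔
      (∃ z ∈ θ₁, p u z ∧ ¬ Q z) ∧ (∃ z ∈ θ₂, p u z ∧ ¬ Q z) := by
  obtain ⟨z₁, ⟨hz₁θ, hz₁p⟩, hu₁⟩ := h1
  obtain ⟨z₂, ⟨hz₂θ, hz₂p⟩, hu₂⟩ := h2
  constructor
  · intro hn
    exact ⟨⟨z₁, hz₁θ, hz₁p, fun hq => hn ⟨z₁, hz₁p, hq⟩⟩,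
           ⟨z₂, hz₂θ, hz₂p, fun hq => hn ⟨z₂, hz₂p, hq⟩⟩⟩
  · rintro ⟨⟨w₁, hw₁θ, hw₁p, hw₁q⟩, ⟨w₂, hw₂θ, hw₂p, hw₂q⟩⟩ ⟨z, hzp, hzq⟩
    rcases hcomp z hzp with hz | hz
    · exact hw₁q (hu₁ w₁ ⟨hw₁θ, hw₁p⟩ ▸ hu₁ z ⟨hz, hzp⟩ ▸ hzq)
    · exact hw₂q (hu₂ w₂ ⟨hw₂θ, hw₂p⟩ ▸ hu₂ z ⟨hz, hzp⟩ ▸ hzq)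
end

section
/- Let p : α → β → Prop, u : α, and θ₁ θ₂ : Set β. Suppose every z with p u z lies in θ₁ ∪ θ₂, and for each i ∈ {1,2} there is at most one z ∈ θᵢ with p u z. Then ¬(∃ z, p u z ∧ Q z) is equivalent to the conjunction over i ∈ {1,2} of: (¬ ∃ z ∈ θᵢ, p u z) ∨ (∃ z ∈ θᵢ, p u z ∧ ¬ Q z). -/
theorem stmt_3 {α β : Type*} (p : α → β → Prop) (Q : β → Prop) (u : α)
    (θ₁ θ₂ : Set β)
    (hcomp : ∀ z, p u z → z ∈ θ₁ ∨ z ∈ θ₂)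
    (h1 : ∀ z₁ z₂, z₁ ∈ θ₁ → z₂ ∈ θ₁ → p u z₁ → p u z₂ → z₁ = z₂)
    (h2 : ∀ z₁ z₂, z₁ ∈ θ₂ → z₂ ∈ θ₂ → p u z₁ → p u z₂ → z₁ = z₂) :
    ¬(∃ z, p u z ∧ Q z) ↔
      ((¬ ∃ z ∈ θ₁, p u z) ∨ (∃ z ∈ θ₁, p u z ∧ ¬ Q z)) ∧
      ((¬ ∃ z ∈ θ₂, p u z) ∨ (∃ z ∈ θ₂, p u z ∧ ¬ Q z)) := by
  constructor
  · intro h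
    constructor
    · by_cases hx : ∃ z ∈ θ₁, p u z
      · obtain ⟨z, hz, hp⟩ := hx
        exact Or.inr ⟨z, hz, hp, fun hQ => h ⟨z, hp, hQ⟩⟩
      · exact Or.inl hx
    · by_cases hx : ∃ z ∈ θ₂, p u z
      · obtain ⟨z, hz, hp⟩ := hx
        exact Or.inr ⟨z, hz, hp, fun hQ => h ⟨z, hp, hQ⟩⟩
      · exact Or.inl hx
  · rintro ⟨c1, c2⟩ ⟨z, hp, hQ⟩
    rcases hcomp z hp with hz | hz
    · rcases c1 with hne | ⟨w, hw, hpw, hnQ⟩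
      · exact hne ⟨z, hz, hp⟩
      · exact hnQ ((h1 w z hw hz hpw hp) ▸ hQ)
    · rcases c2 with hne | ⟨w, hw, hpw, hnQ⟩
      · exact hne ⟨z, hz, hp⟩
      · exact hnQ ((h2 w z hw hz hpw hp) ▸ hQ)
end
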